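/- Let G be a k×n generator matrix of a linear code C over F_q with hull dimension ℓ, partitioned as G = [H; A] with H generating Hull(C). Then rank(A·Aᵀ) = k − ℓ; in particular A·Aᵀ is invertible. -/

import Mathlib

/-! If `(A Aᵀ) x = 0`, the codeword `v = xᵀ A` is orthogonal to the rows of `A`, and also to
those of `H`, which lie in `C^⊥`; hence `v ∈ C ∩ C^⊥ = rowSpace H`. Independence of the rows of
`[H; A]` makes `rowSpace H ∩ rowSpace A = 0`, so `v = 0` and then `x = 0`. -/

open Matrix

variable {F : Type*} [Field F]

/-- Row space of a matrix: the code generated by its rows. -/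
def rowSpace {m ι : Type*} (G : Matrix m ι F) : Submodule F (ι → F) :=
  Submodule.span F (Set.range G)

/-- Dual of a code with respect to the form `⟨x, c⟩ = ∑ i, x i * s (c i)`.
For `s = id` this is the Euclidean dual; for `s = (· ^ q)` the Hermitian dual. -/
def sDual {ι : Type*} [Fintype ι] (s : F → F) (C : Submodule F (ι → F)) :
    Submodule F (ι → F) where
  carrier := {x | ∀ c ∈ C, ∑ i, x i * s (c i) = 0}
  zero_mem' := by intro c hc; simp
  add_mem' := by
    intro a b ha hb c hc
    simp [Pi.add_apply, add_mul, Finset.sum_add_distrib, ha c hc, hb c hc]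
  smul_mem' := by
    intro r a ha c hc
    simp [Pi.smul_apply, smul_eq_mul, mul_assoc, ← Finset.mul_sum, ha c hc]

/-- The hull of a code: its intersection with its dual. -/
def sHull {ι : Type*} [Fintype ι] (s : F → F) (C : Submodule F (ι → F)) :
    Submodule F (ι → F) :=
  C ⊓ sDual s C

/-- `Ct` is an LCD embedding of `C`: `Ct` is LCD and puncturing `Ct` on the
complement of some coordinate subset recovers `C`. -/
def IsLCDEmbedding {ι : Type*} [Fintype ι] {N : ℕ} (s : F → F)
    (C : Submodule F (ι → F)) (Ct : Submodule F (Fin N → F)) : Prop :=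
  sHull s Ct = ⊥ ∧ ∃ f : ι → Fin N, Function.Injective f ∧
    Submodule.map (LinearMap.funLeft F F f) Ct = C

section

variable {m m₁ m₂ ι : Type*}

theorem mem_rowSpace_iff [Fintype m] {G : Matrix m ι F} {v : ι → F} :
    v ∈ rowSpace G ↔ ∃ x, x ᵥ* G = v := by
  change v ∈ Submodule.span F (Set.range G.row) ↔ _
  rw [← range_vecMulLinear]
  rfl

theorem rowSpace_le_rowSpace_fromRows_right (H : Matrix m₁ ι F) (A : Matrix m₂ ι F) :
    rowSpace A ≤ rowSpace (fromRows H A) :=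
  Submodule.span_mono <| Set.range_subset_iff.2 fun i => ⟨Sum.inr i, rfl⟩

variable [Fintype ι]

theorem le_sDual_id_comm {C D : Submodule F (ι → F)} : C ≤ sDual id D ↔ D ≤ sDual id C :=
  ⟨fun h d hd c hc => (dotProduct_comm d c).trans (h hc d hd),
    fun h c hc d hd => (dotProduct_comm c d).trans (h hd c hc)⟩

theorem mem_sDual_id_rowSpace_iff [Fintype m] {G : Matrix m ι F} {v : ι → F} :
    v ∈ sDual id (rowSpace G) ↔ G *ᵥ v = 0 := by
  change (∀ c ∈ _, v ⬝ᵥ c = 0) ↔ _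
  refine ⟨fun h => funext fun i => ?_, fun h c hc => ?_⟩
  · rw [mulVec, dotProduct_comm]
    exact h (G i) (Submodule.subset_span ⟨i, rfl⟩)
  · obtain ⟨x, rfl⟩ := mem_rowSpace_iff.1 hc
    rw [← mulVec_transpose, dotProduct_mulVec, vecMul_transpose, h, zero_dotProduct]

theorem mulVec_eq_zero_of_rowSpace_le_sDual_id [Fintype m] {H : Matrix m ι F}
    {C : Submodule F (ι → F)} (hH : rowSpace H ≤ sDual id C) {v : ι → F} (hv : v ∈ C) :
    H *ᵥ v = 0 :=
  mem_sDual_id_rowSpace_iff.1 (le_sDual_id_comm.1 hH hv)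

theorem isUnit_mul_transpose_of_rowSpace_eq_sHull [Fintype m₁] [Fintype m₂] [DecidableEq m₂]
    (H : Matrix m₁ ι F) (A : Matrix m₂ ι F)
    (hH : rowSpace H = sHull id (rowSpace (fromRows H A)))
    (hind : LinearIndependent F (fromRows H A)) :
    IsUnit (A * Aᵀ) := by
  obtain ⟨-, hA, hdisj⟩ := linearIndependent_sum.1 hind
  rw [← mulVec_injective_iff_isUnit, ← coe_mulVecLin, injective_iff_map_eq_zero]
  intro x (hx : (A * Aᵀ) *ᵥ x = 0)
  set v := x ᵥ* A with hv_def
  have hvA : v ∈ rowSpace A := mem_rowSpace_iff.2 ⟨x, rfl⟩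
  have hvC : v ∈ rowSpace (fromRows H A) := rowSpace_le_rowSpace_fromRows_right H A hvA
  have hvDual : v ∈ sDual id (rowSpace (fromRows H A)) := by
    have hHv : H *ᵥ v = 0 :=
      mulVec_eq_zero_of_rowSpace_le_sDual_id (hH.trans_le inf_le_right) hvC
    rw [mem_sDual_id_rowSpace_iff, fromRows_mulVec, hHv, hv_def, ← mulVec_transpose,
      mulVec_mulVec, hx]
    exact Sum.elim_zero_zero
  have hvH : v ∈ rowSpace H := hH ▸ ⟨hvC, hvDual⟩
  have hv0 : v = 0 := Submodule.disjoint_def.1 hdisj v hvH hvA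
  exact vecMul_injective_iff.2 hA (hv0.trans (zero_vecMul A).symm)

end

theorem stmt17_general {F : Type*} [Field F] {n k ℓ : ℕ}
    {C : Submodule F (Fin n → F)}
    (H : Matrix (Fin ℓ) (Fin n) F) (A : Matrix (Fin (k - ℓ)) (Fin n) F)
    (hH : rowSpace H = sHull (id : F → F) C)
    (hC : rowSpace (fromRows H A) = C)
    (hind : LinearIndependent F (fromRows H A)) :
    (A * Aᵀ).rank = k - ℓ ∧ IsUnit (A * Aᵀ) := by
  subst hC
  have hU := isUnit_mul_transpose_of_rowSpace_eq_sHull H A hH hind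
  exact ⟨by rw [rank_of_isUnit _ hU, Fintype.card_fin], hU⟩

/-- with generator matrix `[H; A]`, `H` generating the hull, the matrix `A * Aᵀ`
has full rank `k - ℓ`, in particular it is invertible. -/
theorem stmt17 {F : Type*} [Field F] [Fintype F] {n k ℓ : ℕ}
    {C : Submodule F (Fin n → F)}
    (H : Matrix (Fin ℓ) (Fin n) F) (A : Matrix (Fin (k - ℓ)) (Fin n) F)
    (hH : rowSpace H = sHull (id : F → F) C)
    (hC : rowSpace (fromRows H A) = C)
    (hind : LinearIndependent F (fromRows H A))
    (hk : k = Module.finrank F C)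
    (hl : ℓ = Module.finrank F ↥(sHull (id : F → F) C)) :
    (A * Aᵀ).rank = k - ℓ ∧ IsUnit (A * Aᵀ) :=
  stmt17_general H A hH hC hind
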